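/- arXiv:1906.08075 — 6 statements merged into one kernel-verified Lean document; each statement's English description precedes it below -/
import Mathlib

section
/- Let a > 1, m > 0, m' < m·a and C > 0 be real numbers. Then there exists a constant c > 0, depending only on a, m, m' and C, with the following property: if Y : ℝ → [0,∞) is differentiable on [0,∞) and satisfies, for all t ≥ 0, Y'(t) + (a/(1+t))·Y(t) ≤ C·( Y(t)/(1+t)² + Y(t)² + (1+t)^{m'−1}·Y(t)^{m+1} ), and if Y(0) ≤ c, then for all t ≥ 0 one has Y(t) ≤ 2·e^{C·t/(1+t)}·Y(0)/(1+t)^a. -/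
/-!
Comparison with an explicit barrier. While `Y t < K (1 + t) ^ (-a)`, both nonlinear terms are
dominated linearly: `Y² < K (1 + t) ^ (-a) Y` and `(1 + t) ^ (m' - 1) Y ^ (m + 1) ≤
K ^ m (1 + t) ^ (m' - m a - 1) Y`, so `Y' < r Y` with `r = barrierRate`. The solution
`B = D exp R` of `B' = r B` (with `R = barrierExponent`, `R 0 = 0`) is at most
`D exp (C t / (1 + t) + Φ) / (1 + t) ^ a`, where `Φ = barrierGain` bounds the integrals of the two
integrable rates and tends to `0` with `K`. Taking `Φ ≤ log 2` and `D < K / (2 exp C)` keeps `B`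
strictly below `K (1 + t) ^ (-a)`, so `Y` can never cross `B` from below; letting `D ↓ Y 0` gives
the bound.
-/

open Real Set Filter Topology

lemma hasDerivAt_one_add_rpow_sub_one_div {p t : ℝ} (hp : p ≠ 0) (ht : -1 < t) :
    HasDerivAt (fun s => ((1 + s) ^ p - 1) / p) ((1 + t) ^ (p - 1)) t := by
  refine ((((hasDerivAt_id t).const_add 1).rpow_const (p := p)
    (Or.inl (by simp; linarith))).sub_const 1).div_const p |>.congr_deriv ?_
  field_simp
  simp

lemma rpow_sub_one_div_le_neg_inv {x p : ℝ} (hx : 0 ≤ x) (hp : p < 0) :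
    (x ^ p - 1) / p ≤ -p⁻¹ := by
  rw [div_le_iff_of_neg hp, neg_mul, inv_mul_cancel₀ hp.ne]
  linarith [rpow_nonneg hx p]

lemma hasDerivAt_mul_div_one_add {C t : ℝ} (ht : -1 < t) :
    HasDerivAt (fun s => C * s / (1 + s)) (C / (1 + t) ^ 2) t := by
  refine ((hasDerivAt_id t).const_mul C).div ((hasDerivAt_id t).const_add 1)
    (by simp; linarith) |>.congr_deriv ?_
  simp
  ring

lemma mul_div_one_add_le {C t : ℝ} (hC : 0 ≤ C) (ht : 0 ≤ t) : C * t / (1 + t) ≤ C := by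
  rw [div_le_iff₀ (by linarith)]
  nlinarith

lemma le_of_forall_mem_Ioo_le {f : ℝ → ℝ} {u x y : ℝ} (hf : ContinuousWithinAt f (Ioi x) x)
    (hxy : x < y) (h : ∀ z ∈ Ioo x y, u ≤ f z) : u ≤ f x :=
  ge_of_tendsto hf (eventually_of_mem (Ioo_mem_nhdsGT hxy) h)

noncomputable section

variable (a m m' C K : ℝ)

def barrierRate (t : ℝ) : ℝ :=
  -a / (1 + t) + C / (1 + t) ^ 2 + C * (K * (1 + t) ^ (-a) + K ^ m * (1 + t) ^ (m' - m * a - 1))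

def barrierExponent (t : ℝ) : ℝ :=
  -a * log (1 + t) + C * t / (1 + t) +
    C * (K * (((1 + t) ^ (1 - a) - 1) / (1 - a)) +
      K ^ m * (((1 + t) ^ (m' - m * a) - 1) / (m' - m * a)))

def barrierGain : ℝ := C * (K / (a - 1) + K ^ m / (m * a - m'))

variable {a m m' C K}

lemma hasDerivAt_barrierExponent (ha : a ≠ 1) (hm' : m' ≠ m * a) {t : ℝ} (ht : -1 < t) :
    HasDerivAt (barrierExponent a m m' C K) (barrierRate a m m' C K t) t := by
  have hlog := (((hasDerivAt_id t).const_add 1).log (by simp; linarith)).const_mul (-a)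
  have h₁ := hasDerivAt_one_add_rpow_sub_one_div (sub_ne_zero.2 ha.symm) ht
  have h₂ := hasDerivAt_one_add_rpow_sub_one_div (sub_ne_zero.2 hm') ht
  refine (hlog.add (hasDerivAt_mul_div_one_add ht)).add
    (((h₁.const_mul K).add (h₂.const_mul (K ^ m))).const_mul C) |>.congr_deriv ?_
  simp only [barrierRate, id, sub_sub_cancel_left]
  ring

lemma exp_barrierExponent_le (ha : 1 < a) (hm' : m' < m * a) (hC : 0 ≤ C) (hK : 0 ≤ K)
    {t : ℝ} (ht : -1 < t) :
    exp (barrierExponent a m m' C K t) ≤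
      (1 + t) ^ (-a) * exp (C * t / (1 + t) + barrierGain a m m' C K) := by
  have h1 : 0 < 1 + t := by linarith
  have hψ₁ := rpow_sub_one_div_le_neg_inv h1.le (p := 1 - a) (by linarith)
  have hψ₂ := rpow_sub_one_div_le_neg_inv h1.le (p := m' - m * a) (by linarith)
  rw [neg_inv, neg_sub, ← one_div] at hψ₁ hψ₂
  have hgain : C * (K * (((1 + t) ^ (1 - a) - 1) / (1 - a)) +
      K ^ m * (((1 + t) ^ (m' - m * a) - 1) / (m' - m * a))) ≤ barrierGain a m m' C K := by
    rw [barrierGain, div_eq_mul_one_div K, div_eq_mul_one_div (K ^ m)]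
    gcongr
  rw [rpow_def_of_pos h1, ← exp_add, exp_le_exp, barrierExponent]
  linarith

lemma ode_rhs_lt_barrierRate_mul (hm : 0 ≤ m) (hC : 0 < C) {t y : ℝ} (ht : -1 < t)
    (hy : 0 < y) (hyK : y < K * (1 + t) ^ (-a)) :
    C * (y / (1 + t) ^ (2 : ℝ) + y ^ (2 : ℝ) + (1 + t) ^ (m' - 1) * y ^ (m + 1)) -
      a / (1 + t) * y < barrierRate a m m' C K t * y := by
  have h1 : 0 < 1 + t := by linarith
  have hK : 0 ≤ K := by
    by_contra! hK
    linarith [mul_neg_of_neg_of_pos hK (rpow_pos_of_pos h1 (-a))]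
  have hsq : y ^ (2 : ℝ) < y * (K * (1 + t) ^ (-a)) := by
    rw [rpow_two, sq]
    exact mul_lt_mul_of_pos_left hyK hy
  have hpow : (1 + t) ^ (m' - 1) * y ^ (m + 1) ≤ y * (K ^ m * (1 + t) ^ (m' - m * a - 1)) := by
    have hym : y ^ m ≤ K ^ m * (1 + t) ^ (-a * m) := by
      rw [rpow_mul h1.le, ← mul_rpow hK (by positivity)]
      exact rpow_le_rpow hy.le hyK.le hm
    calc (1 + t) ^ (m' - 1) * y ^ (m + 1) = y * (1 + t) ^ (m' - 1) * y ^ m := by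
          rw [rpow_add_one hy.ne']; ring
      _ ≤ y * (1 + t) ^ (m' - 1) * (K ^ m * (1 + t) ^ (-a * m)) := by gcongr
      _ = y * (K ^ m * (1 + t) ^ (m' - m * a - 1)) := by
          rw [show m' - m * a - 1 = (m' - 1) + -a * m by ring, rpow_add h1]; ring
  rw [barrierRate, rpow_two]
  linear_combination mul_lt_mul_of_pos_left hsq hC + mul_le_mul_of_nonneg_left hpow hC.le

lemma exists_pos_barrierGain_le (hm : 0 < m) {ε : ℝ} (hε : 0 < ε) :
    ∃ K > 0, barrierGain a m m' C K ≤ ε := by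
  have hcont : ContinuousAt (barrierGain a m m' C) 0 :=
    ((continuousAt_id.div_const _).add
      ((continuousAt_rpow_const 0 m (Or.inr hm.le)).div_const _)).const_mul C
  have h0 : barrierGain a m m' C 0 < ε := by simpa [barrierGain, zero_rpow hm.ne'] using hε
  obtain ⟨K, hKε, hK⟩ :=
    (((hcont.eventually (gt_mem_nhds h0)).filter_mono nhdsWithin_le_nhds).and
      (self_mem_nhdsWithin (s := Ioi 0))).exists
  exact ⟨K, hK, hKε.le⟩

theorem le_mul_exp_barrierExponent (ha : 1 < a) (hm : 0 ≤ m) (hm' : m' < m * a) (hC : 0 < C)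
    {D : ℝ} (hD : 0 < D) (hDK : D * exp (C + barrierGain a m m' C K) < K)
    {Y : ℝ → ℝ} (hY : Differentiable ℝ Y)
    (hODE : ∀ t : ℝ, 0 ≤ t →
      deriv Y t + (a / (1 + t)) * Y t ≤
        C * (Y t / (1 + t) ^ (2 : ℝ) + Y t ^ (2 : ℝ) + (1 + t) ^ (m' - 1) * Y t ^ (m + 1)))
    (hY0 : Y 0 < D) {t : ℝ} (ht : 0 ≤ t) :
    Y t ≤ D * exp (barrierExponent a m m' C K t) := by
  have hK : 0 ≤ K := (mul_pos hD (exp_pos _)).le.trans hDK.le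
  have hB : ∀ x, -1 < x → HasDerivAt (fun s => D * exp (barrierExponent a m m' C K s))
      (D * exp (barrierExponent a m m' C K x) * barrierRate a m m' C K x) x := fun x hx => by
    simpa [mul_assoc] using
      ((hasDerivAt_barrierExponent ha.ne' hm'.ne hx).exp.const_mul D)
  refine image_le_of_deriv_right_lt_deriv_boundary' (f' := deriv Y) hY.continuous.continuousOn
    (fun x _ => (hY x).hasDerivAt.hasDerivWithinAt) (by simpa [barrierExponent] using hY0.le)
    (fun x hx => (hB x (by linarith [hx.1])).continuousAt.continuousWithinAt)
    (fun x hx => (hB x (by linarith [hx.1])).hasDerivWithinAt) ?_ ⟨ht, le_rfl⟩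
  rintro x ⟨hx, -⟩ hYx
  have hBK : D * exp (barrierExponent a m m' C K x) < K * (1 + x) ^ (-a) := by
    calc D * exp (barrierExponent a m m' C K x)
        ≤ D * ((1 + x) ^ (-a) * exp (C + barrierGain a m m' C K)) := by
          gcongr
          refine (exp_barrierExponent_le ha hm' hC.le hK (by linarith)).trans ?_
          gcongr
          exact mul_div_one_add_le hC.le hx
      _ < K * (1 + x) ^ (-a) := by
          rw [mul_left_comm, mul_comm K]
          gcongr
  calc deriv Y x
      ≤ C * (Y x / (1 + x) ^ (2 : ℝ) + Y x ^ (2 : ℝ) + (1 + x) ^ (m' - 1) * Y x ^ (m + 1)) -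
          a / (1 + x) * Y x := by linarith [hODE x hx]
    _ < barrierRate a m m' C K x * Y x :=
        ode_rhs_lt_barrierRate_mul hm hC (by linarith) (hYx ▸ by positivity) (hYx ▸ hBK)
    _ = _ := by rw [hYx]; ring

theorem le_exp_barrierGain_mul_of_ode (ha : 1 < a) (hm : 0 ≤ m) (hm' : m' < m * a) (hC : 0 < C)
    {D : ℝ} (hD : 0 < D) (hDK : D * exp (C + barrierGain a m m' C K) < K)
    {Y : ℝ → ℝ} (hY : Differentiable ℝ Y)
    (hODE : ∀ t : ℝ, 0 ≤ t →
      deriv Y t + (a / (1 + t)) * Y t ≤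
        C * (Y t / (1 + t) ^ (2 : ℝ) + Y t ^ (2 : ℝ) + (1 + t) ^ (m' - 1) * Y t ^ (m + 1)))
    (hY0 : Y 0 < D) {t : ℝ} (ht : 0 ≤ t) :
    Y t ≤ exp (barrierGain a m m' C K) * exp (C * t / (1 + t)) * D / (1 + t) ^ a := by
  have hK : 0 ≤ K := (mul_pos hD (exp_pos _)).le.trans hDK.le
  calc Y t ≤ D * exp (barrierExponent a m m' C K t) :=
        le_mul_exp_barrierExponent ha hm hm' hC hD hDK hY hODE hY0 ht
    _ ≤ D * ((1 + t) ^ (-a) * exp (C * t / (1 + t) + barrierGain a m m' C K)) := by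
        gcongr
        exact exp_barrierExponent_le ha hm' hC.le hK (by linarith)
    _ = exp (barrierGain a m m' C K) * exp (C * t / (1 + t)) * D / (1 + t) ^ a := by
        rw [exp_add, rpow_neg (by linarith)]
        ring

end

theorem ode_decay_lemma (a m m' C : ℝ) (ha : 1 < a) (hm : 0 < m) (hm' : m' < m * a)
    (hC : 0 < C) :
    ∃ c > 0, ∀ Y : ℝ → ℝ,
      Differentiable ℝ Y →
      (∀ t : ℝ, 0 ≤ t → 0 ≤ Y t) →
      (∀ t : ℝ, 0 ≤ t →
        deriv Y t + (a / (1 + t)) * Y t ≤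
          C * (Y t / (1 + t) ^ (2 : ℝ) + Y t ^ (2 : ℝ) + (1 + t) ^ (m' - 1) * Y t ^ (m + 1))) →
      Y 0 ≤ c →
      ∀ t : ℝ, 0 ≤ t → Y t ≤ 2 * Real.exp (C * t / (1 + t)) * Y 0 / (1 + t) ^ a := by
  obtain ⟨K, hK, hgain⟩ := exists_pos_barrierGain_le (a := a) (m' := m') (C := C) hm
    (log_pos one_lt_two)
  refine ⟨K / (4 * exp C), by positivity, fun Y hY hpos hODE hY0 t ht => ?_⟩
  have hY0K : Y 0 < K / (2 * exp C) := by
    refine hY0.trans_lt (div_lt_div_of_pos_left hK (by positivity) ?_)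
    linarith [exp_pos C]
  refine le_of_forall_mem_Ioo_le (f := fun D => 2 * exp (C * t / (1 + t)) * D / (1 + t) ^ a)
    (by fun_prop) hY0K ?_
  rintro D ⟨hYD, hDK⟩
  have hD : 0 < D := (hpos 0 le_rfl).trans_lt hYD
  have hexp : exp (barrierGain a m m' C K) ≤ 2 := by
    simpa [exp_log two_pos] using exp_le_exp.2 hgain
  have hDK' : D * exp (C + barrierGain a m m' C K) < K := by
    rw [lt_div_iff₀ (by positivity)] at hDK
    calc D * exp (C + barrierGain a m m' C K) ≤ D * (2 * exp C) := by
          rw [exp_add, mul_comm 2]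
          gcongr
      _ < K := hDK
  calc Y t ≤ exp (barrierGain a m m' C K) * exp (C * t / (1 + t)) * D / (1 + t) ^ a :=
        le_exp_barrierGain_mul_of_ode ha hm.le hm' hC hD hDK' hY hODE hYD ht
    _ ≤ 2 * exp (C * t / (1 + t)) * D / (1 + t) ^ a := by gcongr
end

section
/- Let a, m, m', C be real numbers with C > 0 and m > 0, and let Y : ℝ → [0,∞) be differentiable on [0,∞) and satisfy, for all t ≥ 0, Y'(t) + (a/(1+t))·Y(t) ≤ C·( Y(t)/(1+t)² + Y(t)² + (1+t)^{m'−1}·Y(t)^{m+1} ). Define Z(t) := (1+t)^a · e^{−C·t/(1+t)} · Y(t). Then Z is differentiable on [0,∞) and for all t ≥ 0, Z'(t) ≤ C·e^{C}·(1+t)^{−a}·Z(t)² + C·e^{C·m}·(1+t)^{m'−m·a−1}·Z(t)^{m+1}. -/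
open Real

/-! With `w t = (1 + t) ^ a * exp (-(C * t / (1 + t)))` one has
`Z' = w * (Y' + (a / (1 + t) - C / (1 + t) ^ 2) * Y)`: the factor `(1 + t) ^ a` absorbs the
damping term `a / (1 + t) * Y`, and the exponential produces `-C / (1 + t) ^ 2 * Y`, which cancels
the linear term of the hypothesis. The remaining terms `w * Y ^ (p + 1)` are rewritten through
`Z = w * Y`; because `C * t / (1 + t) ≤ C`, the missing exponential factors cost at most
`exp (C * p)`. -/

theorem hasDerivAt_one_add_rpow_mul_exp_mul {Y : ℝ → ℝ} {y' t : ℝ} (a C : ℝ)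
    (hY : HasDerivAt Y y' t) (ht : 0 < 1 + t) :
    HasDerivAt (fun s : ℝ => (1 + s) ^ a * exp (-(C * s / (1 + s))) * Y s)
      ((1 + t) ^ a * exp (-(C * t / (1 + t))) * (y' + (a / (1 + t) - C / (1 + t) ^ 2) * Y t)) t := by
  have hlin : HasDerivAt (fun s : ℝ => 1 + s) 1 t := (hasDerivAt_id t).const_add 1
  have hpow : HasDerivAt (fun s : ℝ => (1 + s) ^ a) (a * (1 + t) ^ (a - 1)) t := by
    simpa using hlin.rpow_const (p := a) (Or.inl ht.ne')
  have hfrac : HasDerivAt (fun s : ℝ => C * s / (1 + s)) (C / (1 + t) ^ 2) t := by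
    refine (((hasDerivAt_id t).const_mul C).div hlin ht.ne').congr_deriv ?_
    simp only [id, mul_one]
    ring
  refine ((hpow.mul hfrac.neg.exp).mul hY).congr_deriv ?_
  simp only [Pi.mul_apply, Pi.neg_apply]
  rw [rpow_sub ht, rpow_one]
  field_simp
  ring

/-- From `x ≤ C`: `exp (-x) ≤ exp (C * p) * exp (-x) ^ (p + 1)`. -/
theorem rpow_mul_exp_neg_mul_le {u x C a p q y : ℝ} (hu : 0 < u) (hxC : x ≤ C) (hp : 0 ≤ p)
    (hy : 0 ≤ y) :
    u ^ a * exp (-x) * (u ^ q * y ^ (p + 1)) ≤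
      exp (C * p) * u ^ (q - p * a) * (u ^ a * exp (-x) * y) ^ (p + 1) := by
  rw [mul_rpow (by positivity) hy]
  simp only [rpow_def_of_pos hu, ← exp_add, ← exp_mul, ← mul_assoc]
  gcongr exp ?_ * _
  nlinarith [mul_nonneg (sub_nonneg.2 hxC) hp]

theorem Z_differential_inequality (a m m' C : ℝ) (hC : 0 < C) (hm : 0 < m)
    (Y : ℝ → ℝ) (hYdiff : Differentiable ℝ Y)
    (hYnn : ∀ t : ℝ, 0 ≤ t → 0 ≤ Y t)
    (hineq : ∀ t : ℝ, 0 ≤ t →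
      deriv Y t + (a / (1 + t)) * Y t ≤
        C * (Y t / (1 + t) ^ (2 : ℝ) + Y t ^ (2 : ℝ) + (1 + t) ^ (m' - 1) * Y t ^ (m + 1)))
    (Z : ℝ → ℝ)
    (hZ : ∀ t : ℝ, Z t = (1 + t) ^ a * Real.exp (-(C * t / (1 + t))) * Y t) :
    DifferentiableOn ℝ Z (Set.Ici 0) ∧
      ∀ t : ℝ, 0 ≤ t →
        deriv Z t ≤
          C * Real.exp C * (1 + t) ^ (-a) * Z t ^ (2 : ℝ) +
            C * Real.exp (C * m) * (1 + t) ^ (m' - m * a - 1) * Z t ^ (m + 1) := by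
  obtain rfl : Z = fun t => (1 + t) ^ a * exp (-(C * t / (1 + t))) * Y t := funext hZ
  have hZderiv (t : ℝ) (ht : 0 ≤ t) :=
    hasDerivAt_one_add_rpow_mul_exp_mul a C (hYdiff t).hasDerivAt (by linarith : 0 < 1 + t)
  refine ⟨fun t ht => (hZderiv t ht).differentiableAt.differentiableWithinAt, fun t ht => ?_⟩
  have hu : 0 < 1 + t := by linarith
  have hxC : C * t / (1 + t) ≤ C := by rw [div_le_iff₀ hu]; nlinarith
  have hw : 0 ≤ (1 + t) ^ a * exp (-(C * t / (1 + t))) := by positivity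
  have hsq := rpow_mul_exp_neg_mul_le (a := a) (q := 0) hu hxC zero_le_one (hYnn t ht)
  have hpow := rpow_mul_exp_neg_mul_le (a := a) (q := m' - 1) hu hxC hm.le (hYnn t ht)
  rw [one_add_one_eq_two, rpow_zero, one_mul, mul_one, zero_sub, one_mul] at hsq
  rw [sub_right_comm] at hpow
  have hY := mul_le_mul_of_nonneg_left (hineq t ht) hw
  rw [rpow_two (1 + t)] at hY
  beta_reduce
  rw [(hZderiv t ht).deriv]
  linear_combination hY + C * hsq + C * hpow
end

section
/- Let a > 1, b > 0, m > 0 and α, β ≥ 0 be real numbers. Let Z : ℝ → [0,∞) be differentiable on [0,∞) and satisfy, for all t ≥ 0, Z'(t) ≤ α·(1+t)^{−a}·Z(t)² + β·(1+t)^{−b−1}·Z(t)^{m+1}. Set Z₀ := Z(0) and assume Z₀ > 0 and (4α/(a−1))·Z₀ + (2^{m+1}·β/b)·Z₀^m < 1. Then Z(t) < 2·Z₀ for all t ≥ 0. -/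
/-!
Let `M = 2 Z₀`. As long as `Z < M` on `[0, T)`, the differential inequality gives
`Z' ≤ α M² (1+t)^(-a) + β M^(m+1) (1+t)^(-b-1)` there, and integrating from `0` yields
`Z T ≤ Z₀ + α M² / (a-1) + β M^(m+1) / b`, which the smallness assumption makes `< M`.
A continuity argument at the first time `Z` reaches `M` then shows that this never happens.
-/

open Real Set

/-- The primitive `∫₀ᵗ (1 + s)^(-p-1) ds` of the decay rate. -/
noncomputable def tailPrimitive (p t : ℝ) : ℝ := (1 - (1 + t) ^ (-p)) / p

@[simp]
theorem tailPrimitive_zero (p : ℝ) : tailPrimitive p 0 = 0 := by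
  simp [tailPrimitive]

theorem hasDerivAt_tailPrimitive {p t : ℝ} (hp : p ≠ 0) (ht : -1 < t) :
    HasDerivAt (tailPrimitive p) ((1 + t) ^ (-p - 1)) t := by
  have hpow : HasDerivAt (fun s : ℝ => (1 + s) ^ (-p)) (1 * -p * (1 + t) ^ (-p - 1)) t :=
    ((hasDerivAt_id' t).const_add 1).rpow_const (Or.inl (by linarith))
  exact ((hpow.const_sub 1).div_const p).congr_deriv (by field_simp)

theorem tailPrimitive_le_inv {p t : ℝ} (hp : 0 < p) (ht : -1 ≤ t) : tailPrimitive p t ≤ p⁻¹ := by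
  have : 0 ≤ (1 + t) ^ (-p) := rpow_nonneg (by linarith) _
  rw [tailPrimitive, div_le_iff₀ hp, inv_mul_cancel₀ hp.ne']
  linarith

theorem forall_lt_of_forall_Ico_lt {α β : Type*} [ConditionallyCompleteLinearOrder α]
    [TopologicalSpace α] [OrderTopology α] [LinearOrder β] [TopologicalSpace β]
    [ClosedIciTopology β] {f : α → β} {c : β} {t₀ : α} (hf : ContinuousOn f (Ici t₀))
    (hstep : ∀ T, t₀ ≤ T → (∀ s ∈ Ico t₀ T, f s < c) → f T < c) :
    ∀ t, t₀ ≤ t → f t < c := by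
  by_contra! ⟨t, ht, hct⟩
  set K := Ici t₀ ∩ f ⁻¹' Ici c
  have hKbdd : BddBelow K := ⟨t₀, fun s hs => hs.1⟩
  obtain ⟨hK₀, hKc⟩ : sInf K ∈ K :=
    (hf.preimage_isClosed_of_isClosed isClosed_Ici isClosed_Ici).csInf_mem ⟨t, ht, hct⟩ hKbdd
  refine (hstep _ hK₀ fun s hs => ?_).not_ge hKc
  by_contra! hcs
  exact hs.2.not_ge (csInf_le hKbdd ⟨hs.1, hcs⟩)

theorem le_add_tailPrimitive_of_deriv_le {a b m α β M T : ℝ} (ha : a ≠ 1) (hb : b ≠ 0)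
    (hm : 0 ≤ m + 1) (hα : 0 ≤ α) (hβ : 0 ≤ β) {Z Z' : ℝ → ℝ} (hT : 0 ≤ T)
    (hZc : ContinuousOn Z (Icc 0 T)) (hZ' : ∀ s ∈ Ico 0 T, HasDerivWithinAt Z (Z' s) (Ici s) s)
    (hZnn : ∀ s ∈ Ico 0 T, 0 ≤ Z s) (hZM : ∀ s ∈ Ico 0 T, Z s ≤ M)
    (hineq : ∀ s ∈ Ico 0 T,
      Z' s ≤ α * (1 + s) ^ (-a) * Z s ^ (2 : ℝ) + β * (1 + s) ^ (-b - 1) * Z s ^ (m + 1)) :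
    Z T ≤ Z 0 + α * M ^ (2 : ℝ) * tailPrimitive (a - 1) T
      + β * M ^ (m + 1) * tailPrimitive b T := by
  have hB : ∀ s, -1 < s → HasDerivAt
      (fun t => Z 0 + α * M ^ (2 : ℝ) * tailPrimitive (a - 1) t
        + β * M ^ (m + 1) * tailPrimitive b t)
      (α * M ^ (2 : ℝ) * (1 + s) ^ (-a) + β * M ^ (m + 1) * (1 + s) ^ (-b - 1)) s := by
    intro s hs
    have h₁ := hasDerivAt_tailPrimitive (sub_ne_zero.2 ha) hs
    rw [show -(a - 1) - 1 = -a by ring] at h₁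
    exact ((h₁.const_mul _).const_add _).add ((hasDerivAt_tailPrimitive hb hs).const_mul _)
  refine image_le_of_deriv_right_le_deriv_boundary hZc hZ' (by simp)
    (fun s hs => (hB s (by linarith [hs.1])).continuousAt.continuousWithinAt)
    (fun s hs => (hB s (by linarith [hs.1])).hasDerivWithinAt) (fun s hs => ?_) ⟨hT, le_rfl⟩
  have hs₀ : 0 ≤ s := hs.1
  have hZs₀ : 0 ≤ Z s := hZnn s hs
  have hZsM : Z s ≤ M := hZM s hs
  calc Z' s ≤ _ := hineq s hs
    _ ≤ α * (1 + s) ^ (-a) * M ^ (2 : ℝ) + β * (1 + s) ^ (-b - 1) * M ^ (m + 1) := by gcongr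
    _ = _ := by ring

theorem bootstrap_lemma (a b m α β : ℝ) (ha : 1 < a) (hb : 0 < b) (hm : 0 < m)
    (hα : 0 ≤ α) (hβ : 0 ≤ β)
    (Z : ℝ → ℝ) (hZdiff : Differentiable ℝ Z)
    (hZnn : ∀ t : ℝ, 0 ≤ t → 0 ≤ Z t)
    (hineq : ∀ t : ℝ, 0 ≤ t →
      deriv Z t ≤ α * (1 + t) ^ (-a) * Z t ^ (2 : ℝ) + β * (1 + t) ^ (-b - 1) * Z t ^ (m + 1))
    (hZ0pos : 0 < Z 0)
    (hsmall : 4 * α / (a - 1) * Z 0 + (2 : ℝ) ^ (m + 1) * β / b * Z 0 ^ m < 1) :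
    ∀ t : ℝ, 0 ≤ t → Z t < 2 * Z 0 := by
  have hgain : α * (2 * Z 0) ^ (2 : ℝ) * (a - 1)⁻¹ + β * (2 * Z 0) ^ (m + 1) * b⁻¹ < Z 0 := by
    have hpow : (2 * Z 0) ^ (m + 1) = 2 ^ (m + 1) * Z 0 ^ m * Z 0 := by
      rw [mul_rpow zero_le_two hZ0pos.le, rpow_add_one hZ0pos.ne', mul_assoc]
    calc _ = (4 * α / (a - 1) * Z 0 + 2 ^ (m + 1) * β / b * Z 0 ^ m) * Z 0 := by
          rw [rpow_two, hpow]; ring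
      _ < 1 * Z 0 := mul_lt_mul_of_pos_right hsmall hZ0pos
      _ = Z 0 := one_mul _
  refine forall_lt_of_forall_Ico_lt hZdiff.continuous.continuousOn fun T hT hlt => ?_
  calc Z T ≤ Z 0 + α * (2 * Z 0) ^ (2 : ℝ) * tailPrimitive (a - 1) T
        + β * (2 * Z 0) ^ (m + 1) * tailPrimitive b T :=
        le_add_tailPrimitive_of_deriv_le ha.ne' hb.ne' (by linarith) hα hβ hT
          hZdiff.continuous.continuousOn (fun s _ => (hZdiff s).hasDerivAt.hasDerivWithinAt)
          (fun s hs => hZnn s hs.1) (fun s hs => (hlt s hs).le) (fun s hs => hineq s hs.1)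
    _ ≤ Z 0 + α * (2 * Z 0) ^ (2 : ℝ) * (a - 1)⁻¹ + β * (2 * Z 0) ^ (m + 1) * b⁻¹ := by
        gcongr
        exacts [tailPrimitive_le_inv (by linarith) (by linarith),
          tailPrimitive_le_inv hb (by linarith)]
    _ < 2 * Z 0 := by linarith
end

section
/- Let d ≥ 1 and let A be a real d×d matrix. Let ε > 0 and assume that every eigenvalue λ ∈ ℂ of A (i.e., every element of the spectrum of A viewed as a complex matrix) satisfies dist(λ, ℝ₋) ≥ ε. Then there exists a constant C > 0 such that for every real t ≥ 0 the matrix I + t·A is invertible and ‖(I + t·A)⁻¹‖ ≤ C/(1 + ε·t), where ‖·‖ is the operator norm induced by the Euclidean norm on ℝ^d. -/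
/-!
Since `ε > 0`, no `r ≤ 0` is an eigenvalue of `A`, so every convex combination
`s • 1 + (1 - s) • A` with `s ∈ [0, 1]` is invertible; by compactness of `[0, 1]` and continuity
of inversion these inverses are bounded by some `K`. Since
`1 + t • A = (1 + t) • (s • 1 + (1 - s) • A)` for `s = (1 + t)⁻¹`, this gives
`‖(1 + t • A)⁻¹‖ ≤ K / (1 + t)`, and `1 + ε t ≤ (1 + ε) (1 + t)`.
-/

open Matrix Set

theorem MulEquivClass.map_ringInverse {F M₀ N₀ : Type*} [MonoidWithZero M₀] [MonoidWithZero N₀]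
    [EquivLike F M₀ N₀] [MulEquivClass F M₀ N₀] (f : F) (a : M₀) :
    f (Ring.inverse a) = Ring.inverse (f a) := by
  by_cases ha : IsUnit a
  · obtain ⟨u, rfl⟩ := ha
    rw [Ring.inverse_unit, eq_comm]
    exact Ring.inverse_unit (Units.map (f : M₀ →* N₀) u)
  · rw [Ring.inverse_non_unit a ha, Ring.inverse_non_unit _ ((MulEquiv.isUnit_map f).not.mpr ha),
      map_zero]

theorem Ring.inverse_smul {𝕜 R : Type*} [Field 𝕜] [Ring R] [Algebra 𝕜 R] {c : 𝕜} (hc : c ≠ 0)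
    (x : R) : Ring.inverse (c • x) = c⁻¹ • Ring.inverse x := by
  have hunit : IsUnit (algebraMap 𝕜 R c) := (IsUnit.mk0 c hc).map _
  have hinv : Ring.inverse (algebraMap 𝕜 R c) = algebraMap 𝕜 R c⁻¹ := by
    rw [← mul_one (Ring.inverse _), Ring.inverse_mul_eq_iff_eq_mul _ _ _ hunit, ← map_mul,
      mul_inv_cancel₀ hc, map_one]
  rw [Algebra.smul_def, Ring.inverse_mul (Or.inl hunit), hinv, ← Algebra.commutes,
    ← Algebra.smul_def]

theorem Matrix.map_mem_spectrum_map_iff {n K L : Type*} [Fintype n] [DecidableEq n] [Field K]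
    [Field L] (f : K →+* L) (A : Matrix n n K) (r : K) :
    f r ∈ spectrum L (A.map f) ↔ r ∈ spectrum K A := by
  have hmap : algebraMap L (Matrix n n L) (f r) - A.map f = (algebraMap K _ r - A).map f := by
    ext i j
    by_cases h : i = j <;> simp [h, algebraMap_matrix_apply]
  rw [spectrum.mem_iff, spectrum.mem_iff, hmap, isUnit_iff_isUnit_det, isUnit_iff_isUnit_det,
    ← RingHom.mapMatrix_apply, ← RingHom.map_det, isUnit_map_iff]

theorem isUnit_smul_one_add_smul_of_nonpos_notMem_spectrum {𝕜 R : Type*} [Field 𝕜]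
    [LinearOrder 𝕜] [IsStrictOrderedRing 𝕜] [Ring R] [Algebra 𝕜 R] {x : R}
    (hx : ∀ r ≤ 0, r ∉ spectrum 𝕜 x) {a b : 𝕜} (ha : 0 ≤ a) (hb : 0 ≤ b) (hab : 0 < a + b) :
    IsUnit (a • (1 : R) + b • x) := by
  rcases hb.eq_or_lt with rfl | hb
  · rw [zero_smul, add_zero, ← Algebra.algebraMap_eq_smul_one]
    exact (IsUnit.mk0 a (by linarith)).map _
  · have hcomb : a • (1 : R) + b • x = (-b) • (algebraMap 𝕜 R (-a / b) - x) := by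
      rw [Algebra.algebraMap_eq_smul_one, smul_sub, smul_smul]
      field_simp
      simp
    rw [hcomb]
    refine (isUnit_smul_iff (Units.mk0 (-b) (by linarith)) _).mpr ?_
    exact spectrum.notMem_iff.mp (hx _ (div_nonpos_of_nonpos_of_nonneg (by linarith) hb.le))

theorem IsCompact.exists_bound_norm_ringInverse {X R : Type*} [TopologicalSpace X] [NormedRing R]
    [CompleteSpace R] {f : X → R} {S : Set X} (hS : IsCompact S) (hf : ContinuousOn f S)
    (hunit : ∀ s ∈ S, IsUnit (f s)) : ∃ K, ∀ s ∈ S, ‖Ring.inverse (f s)‖ ≤ K := by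
  refine hS.exists_bound_of_continuousOn fun s hs => ?_
  obtain ⟨u, hu⟩ := hunit s hs
  exact (hu ▸ NormedRing.inverse_continuousAt u).comp_continuousWithinAt (hf s hs)

theorem exists_norm_ringInverse_one_add_smul_le {R : Type*} [NormedRing R] [NormedAlgebra ℝ R]
    [CompleteSpace R] {x : R} (hx : ∀ r ≤ 0, r ∉ spectrum ℝ x) :
    ∃ C > 0, ∀ t : ℝ, 0 ≤ t → IsUnit (1 + t • x) ∧ ‖Ring.inverse (1 + t • x)‖ ≤ C / (1 + t) := by
  set path : ℝ → R := fun s => s • (1 : R) + (1 - s) • x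
  have hunit : ∀ s ∈ Icc (0 : ℝ) 1, IsUnit (path s) := fun s hs =>
    isUnit_smul_one_add_smul_of_nonpos_notMem_spectrum hx hs.1 (sub_nonneg.2 hs.2) (by simp)
  obtain ⟨K, hK⟩ := isCompact_Icc.exists_bound_norm_ringInverse (by fun_prop) hunit
  refine ⟨max K 1, by positivity, fun t ht => ?_⟩
  have ht1 : 0 < 1 + t := by linarith
  have hs : (1 + t)⁻¹ ∈ Icc (0 : ℝ) 1 := ⟨by positivity, inv_le_one_of_one_le₀ (by linarith)⟩
  have hrescale : 1 + t • x = (1 + t) • path (1 + t)⁻¹ := by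
    simp only [path, smul_add, smul_smul, mul_inv_cancel₀ ht1.ne', one_smul]
    congr 2
    field_simp
    ring
  rw [hrescale, Ring.inverse_smul ht1.ne', norm_smul, norm_inv, Real.norm_of_nonneg ht1.le,
    inv_mul_eq_div]
  exact ⟨(isUnit_smul_iff (Units.mk0 _ ht1.ne') _).mpr (hunit _ hs),
    div_le_div_of_nonneg_right ((hK _ hs).trans (le_max_left K 1)) ht1.le⟩

theorem resolvent_decay_bound_general (d : ℕ) (A : Matrix (Fin d) (Fin d) ℝ)
    (ε : ℝ) (hε : 0 < ε)
    (hspec : ∀ lam ∈ spectrum ℂ (A.map Complex.ofReal),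
      ε ≤ Metric.infDist lam {z : ℂ | z.im = 0 ∧ z.re ≤ 0}) :
    ∃ C > 0, ∀ t : ℝ, 0 ≤ t → IsUnit (1 + t • A) ∧
      ‖Matrix.toEuclideanCLM (𝕜 := ℝ) (n := Fin d) ((1 + t • A)⁻¹)‖ ≤ C / (1 + ε * t) := by
  let T := Matrix.toEuclideanCLM (𝕜 := ℝ) (n := Fin d)
  have hx : ∀ r ≤ 0, r ∉ spectrum ℝ (T A) := by
    intro r hr hmem
    rw [AlgEquiv.spectrum_eq, ← A.map_mem_spectrum_map_iff Complex.ofRealHom] at hmem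
    have hnonpos : (r : ℂ) ∈ {z : ℂ | z.im = 0 ∧ z.re ≤ 0} := ⟨by simp, by simpa⟩
    have hdist := hspec r hmem
    rw [Metric.infDist_zero_of_mem hnonpos] at hdist
    linarith
  obtain ⟨C, hC, hbound⟩ := exists_norm_ringInverse_one_add_smul_le hx
  refine ⟨C * (1 + ε), by positivity, fun t ht => ?_⟩
  obtain ⟨hunit, hnorm⟩ := hbound t ht
  rw [← map_one T, ← map_smul, ← map_add, MulEquiv.isUnit_map] at hunit
  refine ⟨hunit, ?_⟩
  rw [nonsing_inv_eq_ringInverse, MulEquivClass.map_ringInverse, map_add, map_one, map_smul]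
  calc _ ≤ C / (1 + t) := hnorm
    _ ≤ C * (1 + ε) / (1 + ε * t) := by
      rw [div_le_div_iff₀ (by linarith) (by positivity)]
      nlinarith [mul_nonneg hC.le ht]

theorem resolvent_decay_bound (d : ℕ) (hd : 1 ≤ d) (A : Matrix (Fin d) (Fin d) ℝ)
    (ε : ℝ) (hε : 0 < ε)
    (hspec : ∀ lam ∈ spectrum ℂ (A.map Complex.ofReal),
      ε ≤ Metric.infDist lam {z : ℂ | z.im = 0 ∧ z.re ≤ 0}) :
    ∃ C > 0, ∀ t : ℝ, 0 ≤ t → IsUnit (1 + t • A) ∧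
      ‖Matrix.toEuclideanCLM (𝕜 := ℝ) (n := Fin d) ((1 + t • A)⁻¹)‖ ≤ C / (1 + ε * t) :=
  resolvent_decay_bound_general d A ε hε hspec
end

section
/- Let d ≥ 1, let v₀ : ℝ^d → ℝ^d be continuously differentiable, and let t ≥ 0. Assume that for every y ∈ ℝ^d, the linear map Id + t·Dv₀(y) is invertible and that sup_{y ∈ ℝ^d} ‖(Id + t·Dv₀(y))⁻¹‖ < ∞. Then the map X_t : ℝ^d → ℝ^d defined by X_t(y) := y + t·v₀(y) is a bijection of ℝ^d. -/
/-!
By the inverse function theorem `F y = y + t • v₀ y` is a local homeomorphism whose local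
inverses are `C`-Lipschitz, `C` being the bound on `‖DF⁻¹‖`. This a priori bound makes every
`Λ`-Lipschitz path liftable through `F` from any preimage of its starting point: lifts are
`CΛ`-Lipschitz, so their endpoints stay in a compact ball, and near a cluster point of these
endpoints a local inverse continues the lift. Lifting the rays issuing from `F e` gives a continuous
section `G` of `F` with `G (F e) = e`. Then `G ∘ F` and `id` are two lifts of `F` through the
separated local homeomorphism `F` that agree at `e`, so they coincide on the connected space
`ℝ^d`, and `G` is a two-sided inverse of `F`.
-/

open Set Metric Filter Topology
open scoped NNReal

theorem LipschitzOnWith.ite_le_Icc {E : Type*} [PseudoMetricSpace E] {f g : ℝ → E} {K : ℝ≥0}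
    {a b c : ℝ} (hf : LipschitzOnWith K f (Icc a b)) (hg : LipschitzOnWith K g (Icc b c))
    (hfg : f b = g b) : LipschitzOnWith K (fun x => if x ≤ b then f x else g x) (Icc a c) := by
  have across : ∀ x ∈ Icc a c, ∀ y ∈ Icc a c, x ≤ b → b < y →
      dist (f x) (g y) ≤ K * dist x y := by
    intro x hx y hy hxb hby
    calc dist (f x) (g y) ≤ dist (f x) (f b) + dist (g b) (g y) :=
          hfg ▸ dist_triangle _ _ _
      _ ≤ K * dist x b + K * dist b y :=
          add_le_add (hf.dist_le_mul x ⟨hx.1, hxb⟩ b ⟨hx.1.trans hxb, le_rfl⟩)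
            (hg.dist_le_mul b ⟨le_rfl, hby.le.trans hy.2⟩ y ⟨hby.le, hy.2⟩)
      _ = K * dist x y := by
          simp only [Real.dist_eq, abs_of_nonpos (sub_nonpos.2 hxb),
            abs_of_nonpos (sub_nonpos.2 hby.le), abs_of_nonpos (sub_nonpos.2 (hxb.trans hby.le))]
          ring
  refine LipschitzOnWith.of_dist_le_mul fun x hx y hy => ?_
  by_cases hxb : x ≤ b <;> by_cases hyb : y ≤ b <;> simp only [hxb, hyb, if_true, if_false]
  · exact hf.dist_le_mul x ⟨hx.1, hxb⟩ y ⟨hy.1, hyb⟩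
  · exact across x hx y hy hxb (not_le.1 hyb)
  · rw [dist_comm, dist_comm x]
    exact across y hy x hx hyb (not_le.1 hxb)
  · exact hg.dist_le_mul x ⟨(not_le.1 hxb).le, hx.2⟩ y ⟨(not_le.1 hyb).le, hy.2⟩

section PathLifting

variable {E X : Type*} [MetricSpace E] [MetricSpace X] {K Λ : ℝ≥0}

theorem OpenPartialHomeomorph.exists_lift_extension (φ : OpenPartialHomeomorph E X)
    {s : Set X} (hs : s ⊆ φ.target) (hφ : LipschitzOnWith K φ.symm s)
    {γ : ℝ → X} (hγ : LipschitzWith Λ γ) {Γ : ℝ → E} {u c : ℝ} (hu : 0 ≤ u)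
    (hΓ : LipschitzOnWith (K * Λ) Γ (Icc 0 u)) (hΓγ : EqOn (φ ∘ Γ) γ (Icc 0 u))
    (hΓu : Γ u ∈ φ.source) (hγs : MapsTo γ (Icc u c) s) :
    ∃ Γ' : ℝ → E, Γ' 0 = Γ 0 ∧ LipschitzOnWith (K * Λ) Γ' (Icc 0 c) ∧
      EqOn (φ ∘ Γ') γ (Icc 0 c) := by
  have hjoin : Γ u = φ.symm (γ u) := by
    rw [← hΓγ ⟨hu, le_rfl⟩, Function.comp_apply, φ.left_inv hΓu]
  refine ⟨fun v => if v ≤ u then Γ v else φ.symm (γ v), by simp [hu],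
    hΓ.ite_le_Icc (hφ.comp hγ.lipschitzOnWith hγs) hjoin, fun v hv => ?_⟩
  by_cases hvu : v ≤ u
  · simpa [hvu] using hΓγ ⟨hv.1, hvu⟩
  · simp only [Function.comp_apply, hvu, if_false]
    exact φ.right_inv (hs (hγs ⟨(not_le.1 hvu).le, hv.2⟩))

def HasLipschitzLocalInverses (K : ℝ≥0) (p : E → X) : Prop :=
  ∀ x, ∃ φ : OpenPartialHomeomorph E X, x ∈ φ.source ∧ p = φ ∧
    ∃ ε > 0, ball (p x) ε ⊆ φ.target ∧ LipschitzOnWith K φ.symm (ball (p x) ε)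

namespace HasLipschitzLocalInverses

variable {p : E → X}

theorem isLocalHomeomorph (hp : HasLipschitzLocalInverses K p) : IsLocalHomeomorph p :=
  fun x => let ⟨φ, hx, hφ, _⟩ := hp x; ⟨φ, hx, hφ⟩

theorem exists_lift [ProperSpace E] (hp : HasLipschitzLocalInverses K p)
    {γ : ℝ → X} (hγ : LipschitzWith Λ γ) {e : E} (he : p e = γ 0) :
    ∃ Γ : ℝ → E, Γ 0 = e ∧ LipschitzOnWith (K * Λ) Γ (Icc 0 1) ∧ EqOn (p ∘ Γ) γ (Icc 0 1) := by
  set S := {u : ℝ | ∃ Γ : ℝ → E, Γ 0 = e ∧ LipschitzOnWith (K * Λ) Γ (Icc 0 u) ∧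
    EqOn (p ∘ Γ) γ (Icc 0 u)}
  have hS_mono : ∀ u ∈ S, ∀ v ≤ u, v ∈ S := fun u ⟨Γ, h0, hL, hE⟩ v hv =>
    ⟨Γ, h0, hL.mono (Icc_subset_Icc_right hv), hE.mono (Icc_subset_Icc_right hv)⟩
  suffices ∃ u ∈ S, 1 ≤ u from let ⟨u, hu, h1⟩ := this; hS_mono u hu 1 h1
  by_contra! hS_lt
  set T := S ∩ Icc 0 1
  have h0T : (0 : ℝ) ∈ T := by
    refine ⟨⟨fun _ => e, rfl, (LipschitzWith.const' e).lipschitzOnWith, ?_⟩,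
      left_mem_Icc.2 zero_le_one⟩
    rintro v ⟨hv0, hv0'⟩
    rwa [le_antisymm hv0' hv0]
  have hTbdd : BddAbove T := ⟨1, fun _ h => h.2.2⟩
  set m := sSup T
  have := mem_closure_iff_nhdsWithin_neBot.1 (csSup_mem_closure ⟨0, h0T⟩ hTbdd)
  have : Nonempty E := ⟨e⟩
  choose! Γ hΓ0 hΓL hΓlift using fun u (hu : u ∈ S) => hu.out
  have hbound : ∀ u ∈ T, Γ u u ∈ closedBall e (K * Λ) := by
    intro u hu
    have := (hΓL u hu.1).dist_le_mul u ⟨hu.2.1, le_rfl⟩ 0 ⟨le_rfl, hu.2.1⟩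
    rw [hΓ0 u hu.1, Real.dist_eq, sub_zero, abs_of_nonneg hu.2.1] at this
    exact this.trans (mul_le_of_le_one_right (by positivity) hu.2.2)
  obtain ⟨x, -, hx⟩ := (isCompact_closedBall e (K * Λ)).exists_mapClusterPt
    (f := 𝓝[T] m) (u := fun u => Γ u u) (tendsto_principal.2 (eventually_nhdsWithin_of_forall hbound))
  obtain ⟨φ, hxφ, rfl, ε, hε, hball, hLip⟩ := hp x
  have hφx : φ x = γ m := by
    have h1 := hx.continuousAt_comp (φ.continuousAt hxφ)
    have h2 : (φ ∘ fun u => Γ u u) =ᶠ[𝓝[T] m] γ :=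
      eventually_nhdsWithin_of_forall fun u hu => hΓlift u hu.1 ⟨hu.2.1, le_rfl⟩
    exact eq_of_nhds_neBot ((h1.congrFun h2).clusterPt.mono
      (hγ.continuous.tendsto m |>.mono_left nhdsWithin_le_nhds))
  obtain ⟨η, hη, hγη⟩ := Metric.continuous_iff.1 hγ.continuous m ε hε
  obtain ⟨u, hxu, huT, hmu⟩ : ∃ u, Γ u u ∈ φ.source ∧ u ∈ T ∧ m - η / 2 < u :=
    ((hx.frequently (φ.open_source.mem_nhds hxφ)).and_eventually (eventually_mem_nhdsWithin.and
      (nhdsWithin_le_nhds (Ioi_mem_nhds (by linarith))))).exists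
  have hγ_ball : MapsTo γ (Icc u (m + η / 2)) (ball (φ x) ε) := fun v hv =>
    hφx ▸ hγη v (by rw [Real.dist_eq, abs_lt]; constructor <;> linarith [hv.1, hv.2])
  obtain ⟨Γ', hΓ'0, hΓ'L, hΓ'lift⟩ := φ.exists_lift_extension hball hLip hγ huT.2.1
    (hΓL u huT.1) (hΓlift u huT.1) hxu hγ_ball
  have hext : m + η / 2 ∈ S := ⟨Γ', hΓ'0.trans (hΓ0 u huT.1), hΓ'L, hΓ'lift⟩
  have : m + η / 2 ≤ m :=
    le_csSup hTbdd ⟨hext, by linarith [le_csSup hTbdd h0T], (hS_lt _ hext).le⟩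
  linarith

end HasLipschitzLocalInverses

end PathLifting

namespace HasLipschitzLocalInverses

variable {E X : Type*} [MetricSpace E] [ProperSpace E] [NormedAddCommGroup X] [NormedSpace ℝ X]
  {K : ℝ≥0} {p : E → X}

theorem exists_continuous_section (hp : HasLipschitzLocalInverses K p) (e : E) :
    ∃ G : X → E, Continuous G ∧ G (p e) = e ∧ ∀ z, p (G z) = z := by
  have hsep := T2Space.isSeparatedMap p
  have hray : ∀ z, LipschitzWith ‖z - p e‖₊ fun s : ℝ => p e + s • (z - p e) := fun z =>
    LipschitzWith.of_dist_le_mul fun s s' => by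
      rw [dist_add_left, dist_eq_norm, ← sub_smul, norm_smul, mul_comm, Real.dist_eq,
        Real.norm_eq_abs, coe_nnnorm]
  choose Γ hΓ0 hΓL hΓlift using fun z => hp.exists_lift (hray z) (e := e) (by simp)
  let ray : C(unitInterval × X, X) := ⟨fun q => p e + (q.1 : ℝ) • (q.2 - p e), by fun_prop⟩
  have hcont : Continuous fun q : unitInterval × X => Γ q.2 q.1 :=
    hp.isLocalHomeomorph.continuous_lift hsep ray (funext fun q => hΓlift q.2 q.1.2)
      (by simpa [hΓ0] using continuous_const)
      fun z => (hΓL z).continuousOn.comp_continuous continuous_subtype_val Subtype.prop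
  have hbase : Γ (p e) 1 = e := by
    have := hsep.eq_of_comp_eq hp.isLocalHomeomorph.isLocallyInjective
      (g₁ := fun s : unitInterval => Γ (p e) s) (g₂ := fun _ => e)
      (hcont.comp (.prodMk_left (p e))) continuous_const
      (funext fun s => by simpa using hΓlift (p e) s.2) 0 (hΓ0 _)
    exact congrFun this 1
  exact ⟨fun z => Γ z 1, hcont.comp (.prodMk_right 1), hbase,
    fun z => by simpa using hΓlift z (right_mem_Icc.2 zero_le_one)⟩

theorem bijective [PreconnectedSpace E] [Nonempty E] (hp : HasLipschitzLocalInverses K p) :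
    Function.Bijective p := by
  obtain ⟨e⟩ := ‹Nonempty E›
  obtain ⟨G, hG, hGe, hpG⟩ := hp.exists_continuous_section e
  have hGp : G ∘ p = id :=
    (T2Space.isSeparatedMap p).eq_of_comp_eq hp.isLocalHomeomorph.isLocallyInjective
      (hG.comp hp.isLocalHomeomorph.continuous) continuous_id (funext fun x => hpG (p x)) e hGe
  exact Function.bijective_iff_has_inverse.2 ⟨G, congrFun hGp, hpG⟩

end HasLipschitzLocalInverses

section HadamardLevy

variable {E F : Type*} [NormedAddCommGroup E] [NormedSpace ℝ E] [NormedAddCommGroup F]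
  [NormedSpace ℝ F] {f : E → F} {f' : E → E ≃L[ℝ] F} {C : ℝ≥0}

theorem hasLipschitzLocalInverses_of_hasStrictFDerivAt [CompleteSpace E]
    (hf : ∀ x, HasStrictFDerivAt f (f' x : E →L[ℝ] F) x)
    (hC : ∀ x, ‖((f' x).symm : F →L[ℝ] E)‖₊ ≤ C) : HasLipschitzLocalInverses C f := by
  intro x
  set φ := (hf x).toOpenPartialHomeomorph f
  have hφ : f = φ := (hf x).toOpenPartialHomeomorph_coe.symm
  have hx : x ∈ φ.source := (hf x).mem_toOpenPartialHomeomorph_source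
  obtain ⟨ε, hε, hball⟩ := Metric.isOpen_iff.1 φ.open_target (f x) (hφ ▸ φ.map_source hx)
  refine ⟨φ, hx, hφ, ε, hε, hball, ?_⟩
  refine (convex_ball _ _).lipschitzOnWith_of_nnnorm_hasFDerivWithin_le
    (f' := fun y => ((f' (φ.symm y)).symm : F →L[ℝ] E)) (fun y hy => ?_) (fun y _ => hC _)
  refine (φ.hasFDerivAt_symm (hball hy) ?_).hasFDerivWithinAt
  rw [← hφ]
  exact (hf _).hasFDerivAt

theorem bijective_of_hasStrictFDerivAt_of_nnnorm_symm_le [ProperSpace E]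
    (hf : ∀ x, HasStrictFDerivAt f (f' x : E →L[ℝ] F) x)
    (hC : ∀ x, ‖((f' x).symm : F →L[ℝ] E)‖₊ ≤ C) : Function.Bijective f :=
  (hasLipschitzLocalInverses_of_hasStrictFDerivAt hf hC).bijective

end HadamardLevy

theorem characteristic_flow_bijective_general (d : ℕ)
    (v₀ : EuclideanSpace ℝ (Fin d) → EuclideanSpace ℝ (Fin d))
    (hv₀ : ContDiff ℝ 1 v₀) (t : ℝ)
    (hinv : ∀ y, IsUnit
      (ContinuousLinearMap.id ℝ (EuclideanSpace ℝ (Fin d)) + t • fderiv ℝ v₀ y))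
    (hbdd : ∃ C : ℝ, ∀ y,
      ‖Ring.inverse (ContinuousLinearMap.id ℝ (EuclideanSpace ℝ (Fin d)) + t • fderiv ℝ v₀ y)‖ ≤ C) :
    Function.Bijective (fun y => y + t • v₀ y) := by
  obtain ⟨C, hC⟩ := hbdd
  have hderiv : ∀ y, HasStrictFDerivAt (fun y => y + t • v₀ y)
      (ContinuousLinearMap.id ℝ _ + t • fderiv ℝ v₀ y) y := fun y =>
    (hasStrictFDerivAt_id y).add ((hv₀.contDiffAt.hasStrictFDerivAt one_ne_zero).const_smul t)
  refine bijective_of_hasStrictFDerivAt_of_nnnorm_symm_le (f' := fun y => .ofUnit (hinv y).unit)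
    (C := C.toNNReal) hderiv fun y => ?_
  rw [← NNReal.coe_le_coe, coe_nnnorm, Real.coe_toNNReal']
  exact (Ring.inverse_unit (hinv y).unit ▸ hC y).trans (le_max_left _ _)

theorem characteristic_flow_bijective (d : ℕ) (hd : 1 ≤ d)
    (v₀ : EuclideanSpace ℝ (Fin d) → EuclideanSpace ℝ (Fin d))
    (hv₀ : ContDiff ℝ 1 v₀) (t : ℝ) (ht : 0 ≤ t)
    (hinv : ∀ y, IsUnit
      (ContinuousLinearMap.id ℝ (EuclideanSpace ℝ (Fin d)) + t • fderiv ℝ v₀ y))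
    (hbdd : ∃ C : ℝ, ∀ y,
      ‖Ring.inverse (ContinuousLinearMap.id ℝ (EuclideanSpace ℝ (Fin d)) + t • fderiv ℝ v₀ y)‖ ≤ C) :
    Function.Bijective (fun y => y + t • v₀ y) :=
  characteristic_flow_bijective_general d v₀ hv₀ t hinv hbdd
end

section
/- Let d ≥ 1, ε > 0, σ ∈ (0,1), M ≥ 0, C₁ ≥ 1 and t ≥ 0. Let v₀ : ℝ^d → ℝ^d be continuously differentiable with ‖Dv₀(y)‖ ≤ M for all y, and suppose that: (i) the map X_t(y) := y + t·v₀(y) is a bijection of ℝ^d whose inverse is (C₁/(1+εt))-Lipschitz; (ii) for every y, Id + t·Dv₀(y) is invertible with ‖(Id + t·Dv₀(y))⁻¹‖ ≤ C₁/(1+εt); (iii) |det(Id + t·Dv₀(y))| ≤ C₁·(1+εt)^d for every y. Define K̃_t : ℝ^d → (d×d real matrices) by K̃_t(x) := (Id + t·Dv₀(X_t⁻¹(x)))⁻¹·(Dv₀(X_t⁻¹(x)) − Id). Then there exists a constant C > 0 depending only on d, σ, ε, M and C₁ (not on t) such that [K̃_t]_σ ≤ C·(1+εt)^{d/2 − 1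 − σ}·[Dv₀]_σ. -/
open MeasureTheory ENNReal

/-- Squared Gagliardo-type seminorm of order `σ` of a function on `ℝ^d`,
valued in `[0,∞]`. -/
noncomputable def gagliardoSq (d : ℕ) {E : Type*} [NormedAddCommGroup E] (σ : ℝ)
    (f : EuclideanSpace ℝ (Fin d) → E) : ℝ≥0∞ :=
  ∫⁻ x, ∫⁻ y,
    (‖f y - f x‖₊ : ℝ≥0∞) ^ 2 / (‖y - x‖₊ : ℝ≥0∞) ^ ((d : ℝ) + 2 * σ)

/-!
Pulling both variables back along `X_t` turns `[K̃_t]_σ²` into a double integral over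
`y, y'` against the Jacobian weights `|det DX_t(y)| |det DX_t(y')| ≤ (C₁ (1+εt)^d)²`.
By the second resolvent identity `K̃_t ∘ X_t = (Id + t Dv₀)⁻¹ (Dv₀ - Id)` is Lipschitz in `Dv₀`
with constant `≲ (1+εt)⁻¹`, and the Lipschitz bound on `X_t⁻¹` gives
`‖y' - y‖ ≤ C₁ (1+εt)⁻¹ ‖X_t y' - X_t y‖`, so the kernel `‖X_t y' - X_t y‖^{-(d+2σ)}` costs at
most a factor `(C₁ / (1+εt))^{d+2σ}`. Collecting powers of `1+εt` and taking square roots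
gives the exponent `d/2 - 1 - σ`.
-/

section Algebra

variable {𝕜 R : Type*} [CommRing 𝕜] [Ring R] [Algebra 𝕜 R]

/-- With `D = Dv₀(X_t⁻¹ x)` this is the paper's `K̃_t(x)`; `1` is the identity map. -/
noncomputable def ktilde (t : 𝕜) (D : R) : R :=
  Ring.inverse (1 + t • D) * (D - 1)

theorem ktilde_sub_ktilde {t : 𝕜} {D D' : R} (hu : IsUnit (1 + t • D))
    (hu' : IsUnit (1 + t • D')) :
    ktilde t D' - ktilde t D =
      Ring.inverse (1 + t • D') * (D' - D) +
        t • (Ring.inverse (1 + t • D') * (D - D') * Ring.inverse (1 + t • D) * (D - 1)) := by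
  set B := Ring.inverse (1 + t • D)
  set B' := Ring.inverse (1 + t • D')
  -- second resolvent identity
  have hBB : B' - B = t • (B' * (D - D') * B) := by
    calc B' - B = B' * ((1 + t • D) - (1 + t • D')) * B := by
          rw [mul_sub, sub_mul, mul_assoc, Ring.mul_inverse_cancel _ hu,
            Ring.inverse_mul_cancel _ hu']
          simp
      _ = t • (B' * (D - D') * B) := by
          rw [add_sub_add_left_eq_sub, ← smul_sub, mul_smul_comm, smul_mul_assoc]
  calc ktilde t D' - ktilde t D = B' * (D' - D) + (B' - B) * (D - 1) := by
        unfold ktilde; noncomm_ring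
    _ = _ := by rw [hBB, smul_mul_assoc]

end Algebra

section NormedAlgebra

variable {R : Type*} [NormedRing R] [NormedAlgebra ℝ R]

theorem norm_ktilde_sub_ktilde_le {t b N : ℝ} {D D' : R} (hu : IsUnit (1 + t • D))
    (hu' : IsUnit (1 + t • D')) (hb : ‖Ring.inverse (1 + t • D)‖ ≤ b)
    (hb' : ‖Ring.inverse (1 + t • D')‖ ≤ b) (hN : ‖D - 1‖ ≤ N) :
    ‖ktilde t D' - ktilde t D‖ ≤ (b + |t| * b ^ 2 * N) * ‖D' - D‖ := by
  rw [ktilde_sub_ktilde hu hu']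
  set B := Ring.inverse (1 + t • D)
  set B' := Ring.inverse (1 + t • D')
  have hb0 : 0 ≤ b := (norm_nonneg _).trans hb
  have h₁ : ‖B' * (D' - D)‖ ≤ b * ‖D' - D‖ :=
    (norm_mul_le _ _).trans (by gcongr)
  have h₂ : ‖t • (B' * (D - D') * B * (D - 1))‖ ≤ |t| * b ^ 2 * N * ‖D' - D‖ := by
    have hprod : ‖B' * (D - D') * B * (D - 1)‖ ≤ ‖B'‖ * ‖D - D'‖ * ‖B‖ * ‖D - 1‖ := by
      refine (norm_mul_le _ _).trans ?_
      gcongr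
      refine (norm_mul_le _ _).trans ?_
      gcongr
      exact norm_mul_le _ _
    rw [norm_smul, Real.norm_eq_abs]
    calc |t| * ‖B' * (D - D') * B * (D - 1)‖ ≤ |t| * (b * ‖D' - D‖ * b * N) := by
          rw [norm_sub_rev D D'] at hprod
          gcongr
          exact hprod.trans (by gcongr)
      _ = |t| * b ^ 2 * N * ‖D' - D‖ := by ring
  calc _ ≤ _ := norm_add_le _ _
    _ ≤ b * ‖D' - D‖ + |t| * b ^ 2 * N * ‖D' - D‖ := add_le_add h₁ h₂
    _ = _ := by ring

end NormedAlgebra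

theorem div_add_mul_div_sq_mul_le {t ε C N : ℝ} (ht : 0 ≤ t) (hε : 0 < ε) (hN : 0 ≤ N) :
    C / (1 + ε * t) + t * (C / (1 + ε * t)) ^ 2 * N ≤ (C + C ^ 2 * N / ε) / (1 + ε * t) := by
  have hu : 0 < 1 + ε * t := by positivity
  have hεt : ε * t / (1 + ε * t) ≤ 1 := (div_le_one hu).2 (by linarith)
  calc C / (1 + ε * t) + t * (C / (1 + ε * t)) ^ 2 * N
      = C / (1 + ε * t) + C ^ 2 * N / ε / (1 + ε * t) * (ε * t / (1 + ε * t)) := by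
        field_simp
    _ ≤ C / (1 + ε * t) + C ^ 2 * N / ε / (1 + ε * t) * 1 := by gcongr
    _ = (C + C ^ 2 * N / ε) / (1 + ε * t) := by ring

theorem ENNReal.mul_mul_div_rpow_le {a b c e x y J K L : ℝ≥0∞} {p : ℝ} (hp : 0 ≤ p)
    (hL0 : L ≠ 0) (hL : L ≠ ⊤) (ha : a ≤ J) (hb : b ≤ J) (hc : c ≤ K * e) (hxy : x ≤ L * y) :
    a * b * (c ^ 2 / y ^ p) ≤ (J * K * L ^ (p / 2)) ^ 2 * (e ^ 2 / x ^ p) := by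
  have hLp0 : L ^ p ≠ 0 := by simp [hL0, hL]
  have hLp : L ^ p ≠ ⊤ := by simp [hL0, hL]
  have hL2 : (L ^ (p / 2)) ^ 2 = L ^ p := by
    rw [← ENNReal.rpow_natCast, ← ENNReal.rpow_mul]; norm_num
  calc a * b * (c ^ 2 / y ^ p) ≤ J * J * ((K * e) ^ 2 / y ^ p) := by gcongr
    _ = J * J * (L ^ p * (K * e) ^ 2 / (L * y) ^ p) := by
        rw [ENNReal.mul_rpow_of_nonneg _ _ hp, ENNReal.mul_div_mul_left _ _ hLp0 hLp]
    _ ≤ J * J * (L ^ p * (K * e) ^ 2 / x ^ p) := by gcongr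
    _ = (J * K * L ^ (p / 2)) ^ 2 * (e ^ 2 / x ^ p) := by
        rw [mul_pow, mul_pow, hL2, mul_div_assoc, mul_div_assoc]; ring

section ChangeOfVariables

variable {d : ℕ} {f : EuclideanSpace ℝ (Fin d) → EuclideanSpace ℝ (Fin d)}
  {f' : EuclideanSpace ℝ (Fin d) → EuclideanSpace ℝ (Fin d) →L[ℝ] EuclideanSpace ℝ (Fin d)}

theorem lintegral_eq_lintegral_abs_det_mul_comp (hf : ∀ y, HasFDerivAt f (f' y) y)
    (hbij : Function.Bijective f) (G : EuclideanSpace ℝ (Fin d) → ℝ≥0∞) :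
    ∫⁻ x, G x = ∫⁻ y, ENNReal.ofReal |(f' y).det| * G (f y) := by
  simpa [Set.image_univ, hbij.2.range_eq] using
    lintegral_image_eq_lintegral_abs_det_fderiv_mul volume MeasurableSet.univ
      (fun y _ => (hf y).hasFDerivWithinAt) hbij.1.injOn G

theorem gagliardoSq_eq_lintegral_comp {F : Type*} [NormedAddCommGroup F] (σ : ℝ)
    (hf : ∀ y, HasFDerivAt f (f' y) y) (hbij : Function.Bijective f)
    (g : EuclideanSpace ℝ (Fin d) → F) :
    gagliardoSq d σ g = ∫⁻ y, ∫⁻ y', ENNReal.ofReal |(f' y).det| * ENNReal.ofReal |(f' y').det| *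
      (‖g (f y') - g (f y)‖ₑ ^ 2 / ‖f y' - f y‖ₑ ^ ((d : ℝ) + 2 * σ)) := by
  simp only [gagliardoSq, ← enorm_eq_nnnorm]
  rw [lintegral_eq_lintegral_abs_det_mul_comp hf hbij]
  refine lintegral_congr fun y => ?_
  rw [lintegral_eq_lintegral_abs_det_mul_comp hf hbij, ← lintegral_const_mul' _ _ ofReal_ne_top]
  simp only [mul_assoc]

theorem gagliardoSq_le_of_comp {F G : Type*} [NormedAddCommGroup F] [NormedAddCommGroup G]
    {σ J k ℓ : ℝ} (hp : 0 ≤ (d : ℝ) + 2 * σ) (hf : ∀ y, HasFDerivAt f (f' y) y)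
    (hbij : Function.Bijective f) {g : EuclideanSpace ℝ (Fin d) → F}
    {h : EuclideanSpace ℝ (Fin d) → G} (hℓ : 0 < ℓ) (hJ : ∀ y, |(f' y).det| ≤ J)
    (hgh : ∀ y y', ‖g (f y') - g (f y)‖ ≤ k * ‖h y' - h y‖)
    (hinv : ∀ y y', ‖y' - y‖ ≤ ℓ * ‖f y' - f y‖) :
    gagliardoSq d σ g ≤
      ENNReal.ofReal (J * k * ℓ ^ (((d : ℝ) + 2 * σ) / 2)) ^ 2 * gagliardoSq d σ h := by
  have hJ0 : 0 ≤ J := (abs_nonneg _).trans (hJ 0)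
  rw [ENNReal.ofReal_mul' (by positivity), ENNReal.ofReal_mul hJ0,
    ← ENNReal.ofReal_rpow_of_nonneg hℓ.le (by linarith)]
  have hfin : (ENNReal.ofReal J * ENNReal.ofReal k *
      ENNReal.ofReal ℓ ^ (((d : ℝ) + 2 * σ) / 2)) ^ 2 ≠ ⊤ := by finiteness
  rw [gagliardoSq_eq_lintegral_comp σ hf hbij, gagliardoSq, ← lintegral_const_mul' _ _ hfin]
  refine lintegral_mono fun y => ?_
  rw [← lintegral_const_mul' _ _ hfin]
  refine lintegral_mono fun y' => ?_
  simp only [← enorm_eq_nnnorm, ← ofReal_norm]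
  refine ENNReal.mul_mul_div_rpow_le hp (by simpa using hℓ) ofReal_ne_top
    (ofReal_le_ofReal (hJ y)) (ofReal_le_ofReal (hJ y')) ?_ ?_
  · rw [← ENNReal.ofReal_mul' (norm_nonneg _)]
    exact ofReal_le_ofReal (hgh y y')
  · rw [← ENNReal.ofReal_mul hℓ.le]
    exact ofReal_le_ofReal (hinv y y')

end ChangeOfVariables

theorem ENNReal.rpow_one_half_le_of_le_sq_mul {a b L : ℝ≥0∞} (h : a ≤ L ^ 2 * b) :
    a ^ (1 / 2 : ℝ) ≤ L * b ^ (1 / 2 : ℝ) := by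
  calc a ^ (1 / 2 : ℝ) ≤ (L ^ 2 * b) ^ (1 / 2 : ℝ) := ENNReal.rpow_le_rpow h (by norm_num)
    _ = L * b ^ (1 / 2 : ℝ) := by
      rw [ENNReal.mul_rpow_of_nonneg _ _ (by norm_num), ← ENNReal.rpow_natCast,
        ← ENNReal.rpow_mul]
      norm_num

theorem mul_rpow_mul_div_mul_div_rpow {u C c : ℝ} (hu : 0 < u) (hC : 0 < C) (a s : ℝ) :
    C * u ^ a * (c / u) * (C / u) ^ ((a + 2 * s) / 2) =
      C ^ ((a + 2 * s) / 2 + 1) * c * u ^ (a / 2 - 1 - s) := by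
  rw [Real.div_rpow hC.le hu.le, Real.rpow_add_one hC.ne',
    show a / 2 - 1 - s = a - 1 - (a + 2 * s) / 2 by ring,
    Real.rpow_sub hu, Real.rpow_sub_one hu.ne']
  field_simp

theorem Ktilde_gagliardo_decay_general (d : ℕ) (ε σ M C₁ : ℝ)
    (hε : 0 < ε) (hσ0 : 0 < σ) (hM : 0 ≤ M) (hC₁ : 1 ≤ C₁) :
    ∃ C > 0, ∀ t : ℝ, 0 ≤ t →
      ∀ v₀ : EuclideanSpace ℝ (Fin d) → EuclideanSpace ℝ (Fin d),
        ContDiff ℝ 1 v₀ →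
        (∀ y, ‖fderiv ℝ v₀ y‖ ≤ M) →
        Function.Bijective (fun y => y + t • v₀ y) →
        (∀ a b, ‖Function.invFun (fun y => y + t • v₀ y) b -
            Function.invFun (fun y => y + t • v₀ y) a‖ ≤ C₁ / (1 + ε * t) * ‖b - a‖) →
        (∀ y, IsUnit
          (ContinuousLinearMap.id ℝ (EuclideanSpace ℝ (Fin d)) + t • fderiv ℝ v₀ y)) →
        (∀ y, ‖Ring.inverse
            (ContinuousLinearMap.id ℝ (EuclideanSpace ℝ (Fin d)) + t • fderiv ℝ v₀ y)‖ ≤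
          C₁ / (1 + ε * t)) →
        (∀ y, |(ContinuousLinearMap.id ℝ (EuclideanSpace ℝ (Fin d)) + t • fderiv ℝ v₀ y).det| ≤
          C₁ * (1 + ε * t) ^ (d : ℝ)) →
        (gagliardoSq d σ (fun x =>
            Ring.inverse (ContinuousLinearMap.id ℝ (EuclideanSpace ℝ (Fin d)) +
                t • fderiv ℝ v₀ (Function.invFun (fun y => y + t • v₀ y) x)) *
              (fderiv ℝ v₀ (Function.invFun (fun y => y + t • v₀ y) x) -
                ContinuousLinearMap.id ℝ (EuclideanSpace ℝ (Fin d))))) ^ (1 / 2 : ℝ) ≤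
          ENNReal.ofReal (C * (1 + ε * t) ^ ((d : ℝ) / 2 - 1 - σ)) *
            (gagliardoSq d σ (fun y => fderiv ℝ v₀ y)) ^ (1 / 2 : ℝ) := by
  have hC₁0 : 0 < C₁ := by linarith
  refine ⟨C₁ ^ (((d : ℝ) + 2 * σ) / 2 + 1) * (C₁ + C₁ ^ 2 * (M + 1) / ε), by positivity, ?_⟩
  intro t ht v₀ hv hDv hbij hinv hunit hinvnorm hdet
  have hu : 0 < 1 + ε * t := by positivity
  set X := fun y => y + t • v₀ y
  have hX : ∀ y, HasFDerivAt X (ContinuousLinearMap.id ℝ _ + t • fderiv ℝ v₀ y) y := fun y =>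
    (hasFDerivAt_id y).add (((hv.differentiable one_ne_zero) y).hasFDerivAt.const_smul t)
  have hXinv : ∀ y, Function.invFun X (X y) = y := Function.leftInverse_invFun hbij.1
  have hKlip : ∀ y y', ‖ktilde t (fderiv ℝ v₀ (Function.invFun X (X y'))) -
      ktilde t (fderiv ℝ v₀ (Function.invFun X (X y)))‖ ≤
        (C₁ + C₁ ^ 2 * (M + 1) / ε) / (1 + ε * t) * ‖fderiv ℝ v₀ y' - fderiv ℝ v₀ y‖ := by
    intro y y'
    rw [hXinv, hXinv]
    refine (norm_ktilde_sub_ktilde_le (N := M + 1) (hunit y) (hunit y') (hinvnorm y) (hinvnorm y')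
      ((norm_sub_le _ _).trans (add_le_add (hDv y) ContinuousLinearMap.norm_id_le))).trans ?_
    rw [abs_of_nonneg ht]
    gcongr
    exact div_add_mul_div_sq_mul_le ht hε (by linarith)
  have hXlow : ∀ y y', ‖y' - y‖ ≤ C₁ / (1 + ε * t) * ‖X y' - X y‖ := fun y y' => by
    simpa only [hXinv] using hinv (X y) (X y')
  have hcomp := gagliardoSq_le_of_comp (g := fun x => ktilde t (fderiv ℝ v₀ (Function.invFun X x)))
    (h := fderiv ℝ v₀) (σ := σ) (by positivity) hX hbij (div_pos hC₁0 hu) hdet hKlip hXlow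
  rw [mul_rpow_mul_div_mul_div_rpow hu hC₁0] at hcomp
  exact ENNReal.rpow_one_half_le_of_le_sq_mul hcomp

theorem Ktilde_gagliardo_decay (d : ℕ) (hd : 1 ≤ d) (ε σ M C₁ : ℝ)
    (hε : 0 < ε) (hσ0 : 0 < σ) (hσ1 : σ < 1) (hM : 0 ≤ M) (hC₁ : 1 ≤ C₁) :
    ∃ C > 0, ∀ t : ℝ, 0 ≤ t →
      ∀ v₀ : EuclideanSpace ℝ (Fin d) → EuclideanSpace ℝ (Fin d),
        ContDiff ℝ 1 v₀ →
        (∀ y, ‖fderiv ℝ v₀ y‖ ≤ M) →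
        Function.Bijective (fun y => y + t • v₀ y) →
        (∀ a b, ‖Function.invFun (fun y => y + t • v₀ y) b -
            Function.invFun (fun y => y + t • v₀ y) a‖ ≤ C₁ / (1 + ε * t) * ‖b - a‖) →
        (∀ y, IsUnit
          (ContinuousLinearMap.id ℝ (EuclideanSpace ℝ (Fin d)) + t • fderiv ℝ v₀ y)) →
        (∀ y, ‖Ring.inverse
            (ContinuousLinearMap.id ℝ (EuclideanSpace ℝ (Fin d)) + t • fderiv ℝ v₀ y)‖ ≤
          C₁ / (1 + ε * t)) →
        (∀ y, |(ContinuousLinearMap.id ℝ (EuclideanSpace ℝ (Fin d)) + t • fderiv ℝ v₀ y).det| ≤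
          C₁ * (1 + ε * t) ^ (d : ℝ)) →
        (gagliardoSq d σ (fun x =>
            Ring.inverse (ContinuousLinearMap.id ℝ (EuclideanSpace ℝ (Fin d)) +
                t • fderiv ℝ v₀ (Function.invFun (fun y => y + t • v₀ y) x)) *
              (fderiv ℝ v₀ (Function.invFun (fun y => y + t • v₀ y) x) -
                ContinuousLinearMap.id ℝ (EuclideanSpace ℝ (Fin d))))) ^ (1 / 2 : ℝ) ≤
          ENNReal.ofReal (C * (1 + ε * t) ^ ((d : ℝ) / 2 - 1 - σ)) *
            (gagliardoSq d σ (fun y => fderiv ℝ v₀ y)) ^ (1 / 2 : ℝ) :=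
  Ktilde_gagliardo_decay_general d ε σ M C₁ hε hσ0 hM hC₁
end
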